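/- arXiv:2507.20612 — 5 statements merged into one kernel-verified Lean document; each statement's English description precedes it below -/
import Mathlib

section
/- Let a, b ∈ ℝⁿ (n ≥ 2) be orthonormal vectors such that a has no zero entry. Define q_i = b_i / a_i for i = 1,…,n. Then (max_i q_i) · (−min_i q_i) ≥ 1. -/
theorem stmt_0 (n : ℕ) (hn : 2 ≤ n) (a b : Fin n → ℝ)
    (ha : ∑ i, a i ^ 2 = 1) (hb : ∑ i, b i ^ 2 = 1)
    (hab : ∑ i, a i * b i = 0) (haz : ∀ i, a i ≠ 0)
    (i j : Fin n)
    (hmax : ∀ k, b k / a k ≤ b i / a i)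
    (hmin : ∀ k, b j / a j ≤ b k / a k) :
    1 ≤ (b i / a i) * (-(b j / a j)) := by
  set M := b i / a i with hM
  set m := b j / a j with hm
  have key : ∀ k, 0 ≤ (M * a k - b k) * (b k - m * a k) := by
    intro k
    have hk := haz k
    have h1 : 0 ≤ (M - b k / a k) * (b k / a k - m) :=
      mul_nonneg (sub_nonneg.2 (hmax k)) (sub_nonneg.2 (hmin k))
    have heq : (M * a k - b k) * (b k - m * a k)
        = a k ^ 2 * ((M - b k / a k) * (b k / a k - m)) := by
      field_simp
    rw [heq]
    exact mul_nonneg (sq_nonneg _) h1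
  have hsum : 0 ≤ ∑ k, (M * a k - b k) * (b k - m * a k) :=
    Finset.sum_nonneg fun k _ => key k
  have expand : ∑ k, (M * a k - b k) * (b k - m * a k)
      = (M + m) * ∑ k, a k * b k - M * m * ∑ k, a k ^ 2 - ∑ k, b k ^ 2 := by
    rw [Finset.mul_sum, Finset.mul_sum, ← Finset.sum_sub_distrib, ← Finset.sum_sub_distrib]
    exact Finset.sum_congr rfl fun k _ => by ring
  rw [expand, ha, hb, hab] at hsum
  nlinarith [hsum]
end

section
/- Let M = û₁ v̂₁ᵀ + û₂ v̂₂ᵀ be an m×n rank-2 real matrix with no zero row or column, where û₁ ∈ ℝᵐ and v̂₁ ∈ ℝⁿ are entrywise positive, ⟨û₁, û₂⟩ = 0, and ⟨v̂₁, v̂₂⟩ = 0. Define min_u = min_i û₂(i)/û₁(i), max_u = max_i û₂(i)/û₁(i), min_v = min_j v̂₂(j)/v̂₁(j), max_v = max_j v̂₂(j)/v̂₁(j). Then M is entrywise nonnegative if and only if max_u · min_v ≥ −1 and min_u · max_v ≥ −1. -/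
theorem stmt_1 (m n : ℕ)
    (u1 u2 : Fin (m + 1) → ℝ) (v1 v2 : Fin (n + 1) → ℝ)
    (hu1 : ∀ i, 0 < u1 i) (hv1 : ∀ j, 0 < v1 j)
    (hu : ∑ i, u1 i * u2 i = 0) (hv : ∑ j, v1 j * v2 j = 0)
    (hrow : ∀ i, ∃ j, u1 i * v1 j + u2 i * v2 j ≠ 0)
    (hcol : ∀ j, ∃ i, u1 i * v1 j + u2 i * v2 j ≠ 0) :
    (∀ i j, 0 ≤ u1 i * v1 j + u2 i * v2 j) ↔
      (Finset.univ.sup' Finset.univ_nonempty (fun i => u2 i / u1 i)) *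
        (Finset.univ.inf' Finset.univ_nonempty (fun j => v2 j / v1 j)) ≥ -1 ∧
      (Finset.univ.inf' Finset.univ_nonempty (fun i => u2 i / u1 i)) *
        (Finset.univ.sup' Finset.univ_nonempty (fun j => v2 j / v1 j)) ≥ -1 := by
  set a : Fin (m + 1) → ℝ := fun i => u2 i / u1 i with ha
  set b : Fin (n + 1) → ℝ := fun j => v2 j / v1 j with hb
  set A := Finset.univ.sup' Finset.univ_nonempty a with hA
  set α := Finset.univ.inf' Finset.univ_nonempty a with hα
  set B := Finset.univ.sup' Finset.univ_nonempty b with hB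
  set β := Finset.univ.inf' Finset.univ_nonempty b with hβ
  have key : ∀ i j, (0 ≤ u1 i * v1 j + u2 i * v2 j) ↔ -1 ≤ a i * b j := by
    intro i j
    have h1 := hu1 i; have h2 := hv1 j
    have heq : u1 i * v1 j + u2 i * v2 j = (u1 i * v1 j) * (1 + a i * b j) := by
      simp only [ha, hb]
      field_simp
    rw [heq]
    constructor
    · intro h; nlinarith [mul_pos h1 h2]
    · intro h; nlinarith [mul_pos h1 h2]
  have haA : ∀ i, a i ≤ A := fun i => Finset.le_sup' a (Finset.mem_univ i)
  have hαa : ∀ i, α ≤ a i := fun i => Finset.inf'_le a (Finset.mem_univ i)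
  have hbB : ∀ j, b j ≤ B := fun j => Finset.le_sup' b (Finset.mem_univ j)
  have hβb : ∀ j, β ≤ b j := fun j => Finset.inf'_le b (Finset.mem_univ j)
  -- sign facts from orthogonality
  have hex_u_nonneg : ∃ i, 0 ≤ u2 i := by
    by_contra hc
    push_neg at hc
    have : ∑ i, u1 i * u2 i < 0 := by
      apply Finset.sum_neg (fun i _ => mul_neg_of_pos_of_neg (hu1 i) (hc i))
        Finset.univ_nonempty
    linarith
  have hex_u_nonpos : ∃ i, u2 i ≤ 0 := by
    by_contra hc
    push_neg at hc
    have : 0 < ∑ i, u1 i * u2 i := by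
      apply Finset.sum_pos (fun i _ => mul_pos (hu1 i) (hc i)) Finset.univ_nonempty
    linarith
  have hex_v_nonneg : ∃ j, 0 ≤ v2 j := by
    by_contra hc
    push_neg at hc
    have : ∑ j, v1 j * v2 j < 0 := by
      apply Finset.sum_neg (fun j _ => mul_neg_of_pos_of_neg (hv1 j) (hc j))
        Finset.univ_nonempty
    linarith
  have hex_v_nonpos : ∃ j, v2 j ≤ 0 := by
    by_contra hc
    push_neg at hc
    have : 0 < ∑ j, v1 j * v2 j := by
      apply Finset.sum_pos (fun j _ => mul_pos (hv1 j) (hc j)) Finset.univ_nonempty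
    linarith
  have hA0 : 0 ≤ A := by
    obtain ⟨i, hi⟩ := hex_u_nonneg
    exact le_trans (div_nonneg hi (hu1 i).le) (haA i)
  have hα0 : α ≤ 0 := by
    obtain ⟨i, hi⟩ := hex_u_nonpos
    exact le_trans (hαa i) (div_nonpos_of_nonpos_of_nonneg hi (hu1 i).le)
  have hB0 : 0 ≤ B := by
    obtain ⟨j, hj⟩ := hex_v_nonneg
    exact le_trans (div_nonneg hj (hv1 j).le) (hbB j)
  have hβ0 : β ≤ 0 := by
    obtain ⟨j, hj⟩ := hex_v_nonpos
    exact le_trans (hβb j) (div_nonpos_of_nonpos_of_nonneg hj (hv1 j).le)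
  constructor
  · intro h
    obtain ⟨iA, -, hiA⟩ := Finset.exists_mem_eq_sup' (Finset.univ_nonempty) a
    obtain ⟨iα, -, hiα⟩ := Finset.exists_mem_eq_inf' (Finset.univ_nonempty) a
    obtain ⟨jB, -, hjB⟩ := Finset.exists_mem_eq_sup' (Finset.univ_nonempty) b
    obtain ⟨jβ, -, hjβ⟩ := Finset.exists_mem_eq_inf' (Finset.univ_nonempty) b
    constructor
    · rw [hA, hβ, hiA, hjβ]
      exact (key iA jβ).mp (h iA jβ)
    · rw [hα, hB, hiα, hjB]
      exact (key iα jB).mp (h iα jB)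
  · rintro ⟨h1, h2⟩ i j
    rw [key i j]
    rcases le_or_gt 0 (a i) with hai | hai
    · rcases le_or_gt 0 (b j) with hbj | hbj
      · nlinarith [mul_nonneg hai hbj]
      · nlinarith [mul_le_mul_of_nonpos_right (haA i) hbj.le,
          mul_le_mul_of_nonneg_left (hβb j) hA0]
    · rcases le_or_gt 0 (b j) with hbj | hbj
      · nlinarith [mul_le_mul_of_nonneg_right (hαa i) hbj,
          mul_le_mul_of_nonpos_left (hbB j) hα0]
      · nlinarith [mul_pos_of_neg_of_neg hai hbj]
end

section
/- Let u₁, u₂ ∈ ℝᵐ and v₁, v₂ ∈ ℝⁿ, with u₁, v₁ entrywise positive, and suppose the matrix N(i,j) = u₁(i)v₁(j) + u₂(i)v₂(j) has rank 2. Let T = [[1, t₂], [t₁, −1]] with t₁, t₂ > 0 chosen such that max_j v₂(j)/v₁(j) ≤ t₁ ≤ −1/min_i u₂(i)/u₁(i) and max_i u₂(i)/u₁(i) ≤ t₂ ≤ −1/min_j v₂(j)/v₁(j) (where the relevant minima are negative). Define L = [u₁ u₂]·T and R = [v₁ v₂]·T⁻ᵀ·(t₁t₂+1). Then L ≥ 0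 and R ≥ 0 entrywise, and L·(T⁻¹[v₁ v₂]ᵀ) = N. -/
lemma aux_pos (a b s t : ℝ) (ha : 0 < a) (hs : s < 0) (hsb : s ≤ b / a)
    (ht : 0 < t) (htu : t ≤ -1 / s) : 0 ≤ a + b * t := by
  have h1 : s * a ≤ b := (le_div_iff₀ ha).mp hsb
  have h2 : -1 ≤ s * t := by
    have hinv : (-1 / s) * (-s) = 1 := by field_simp [hs.ne]
    have := mul_le_mul_of_nonneg_right htu (le_of_lt (neg_pos.mpr hs))
    nlinarith
  nlinarith

lemma aux_neg (a b t : ℝ) (ha : 0 < a) (hub : b / a ≤ t) : 0 ≤ a * t - b := by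
  have := (div_le_iff₀ ha).mp hub
  nlinarith

theorem stmt_14 (m n : ℕ)
    (u1 u2 : Fin (m + 1) → ℝ) (v1 v2 : Fin (n + 1) → ℝ)
    (hu1 : ∀ i, 0 < u1 i) (hv1 : ∀ j, 0 < v1 j)
    (hrank : (Matrix.of fun i j => u1 i * v1 j + u2 i * v2 j).rank = 2)
    (hminu : Finset.univ.inf' Finset.univ_nonempty (fun i => u2 i / u1 i) < 0)
    (hminv : Finset.univ.inf' Finset.univ_nonempty (fun j => v2 j / v1 j) < 0)
    (t1 t2 : ℝ) (ht1 : 0 < t1) (ht2 : 0 < t2)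
    (ht1l : Finset.univ.sup' Finset.univ_nonempty (fun j => v2 j / v1 j) ≤ t1)
    (ht1u : t1 ≤ -1 / Finset.univ.inf' Finset.univ_nonempty (fun i => u2 i / u1 i))
    (ht2l : Finset.univ.sup' Finset.univ_nonempty (fun i => u2 i / u1 i) ≤ t2)
    (ht2u : t2 ≤ -1 / Finset.univ.inf' Finset.univ_nonempty (fun j => v2 j / v1 j)) :
    (∀ i, 0 ≤ u1 i + u2 i * t1 ∧ 0 ≤ u1 i * t2 - u2 i) ∧
    (∀ j, 0 ≤ v1 j + v2 j * t2 ∧ 0 ≤ v1 j * t1 - v2 j) ∧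
    (∀ i j, (u1 i + u2 i * t1) * ((v1 j + t2 * v2 j) / (t1 * t2 + 1)) +
        (u1 i * t2 - u2 i) * ((t1 * v1 j - v2 j) / (t1 * t2 + 1)) =
        u1 i * v1 j + u2 i * v2 j) := by
  refine ⟨fun i => ⟨?_, ?_⟩, fun j => ⟨?_, ?_⟩, fun i j => ?_⟩
  · exact aux_pos _ _ _ _ (hu1 i) hminu
      (Finset.inf'_le _ (Finset.mem_univ i)) ht1 ht1u
  · exact aux_neg _ _ _ (hu1 i)
      (le_trans (Finset.le_sup' (fun i => u2 i / u1 i) (Finset.mem_univ i)) ht2l)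
  · exact aux_pos _ _ _ _ (hv1 j) hminv
      (Finset.inf'_le _ (Finset.mem_univ j)) ht2 ht2u
  · exact aux_neg _ _ _ (hv1 j)
      (le_trans (Finset.le_sup' (fun j => v2 j / v1 j) (Finset.mem_univ j)) ht1l)
  · have h : t1 * t2 + 1 ≠ 0 := by positivity
    field_simp
    ring
end

section
/- Let N be an m×n nonnegative matrix of rank 2 with no zero rows or columns, with singular values σ₁ ≥ σ₂ > 0 and scaled singular vectors û_k = σ_k^{1/2}u_k, v̂_k = σ_k^{1/2}v_k (k = 1,2), where û₁, v̂₁ > 0 entrywise. With min_u, max_u, min_v, max_v defined as the extremal ratios û₂(i)/û₁(i) and v̂₂(j)/v̂₁(j), we have: if σ₁ = σ₂ then max_u·min_v = −1 and min_u·max_v = −1. -/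
lemma stmt16_aux (k : ℕ) (w u : Fin (k + 1) → ℝ) (hw : ∀ i, 0 < w i)
    (h1 : ∑ i, w i ^ 2 = 1) (h2 : ∑ i, u i ^ 2 = 1) (h0 : ∑ i, w i * u i = 0) :
    (Finset.univ.inf' Finset.univ_nonempty (fun i => u i / w i)) *
      (Finset.univ.sup' Finset.univ_nonempty (fun i => u i / w i)) ≤ -1 := by
  set f : Fin (k + 1) → ℝ := fun i => u i / w i with hf
  set a := Finset.univ.inf' Finset.univ_nonempty f with ha
  set b := Finset.univ.sup' Finset.univ_nonempty f with hb
  have hbd : ∀ i, a ≤ f i ∧ f i ≤ b := fun i =>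
    ⟨Finset.inf'_le f (Finset.mem_univ i), Finset.le_sup' f (Finset.mem_univ i)⟩
  have hsum : (0:ℝ) ≤ ∑ i, w i ^ 2 * ((f i - a) * (b - f i)) := by
    apply Finset.sum_nonneg
    intro i _
    exact mul_nonneg (sq_nonneg _) (mul_nonneg (by linarith [(hbd i).1]) (by linarith [(hbd i).2]))
  have hid : ∀ i, w i ^ 2 * ((f i - a) * (b - f i))
      = (a + b) * (w i * u i) - a * b * (w i ^ 2) - u i ^ 2 := by
    intro i
    have hwne : w i ≠ 0 := (hw i).ne'
    simp only [hf]
    field_simp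
    ring
  have := hsum
  rw [Finset.sum_congr rfl (fun i _ => hid i)] at this
  simp only [Finset.sum_sub_distrib, ← Finset.mul_sum] at this
  rw [h0, h1, h2] at this
  nlinarith [this]

theorem stmt_16 (m n : ℕ)
    (N : Matrix (Fin (m + 1)) (Fin (n + 1)) ℝ)
    (σ1 σ2 : ℝ) (hσ : σ1 ≥ σ2) (hσ2 : 0 < σ2)
    (u1 u2 : Fin (m + 1) → ℝ) (v1 v2 : Fin (n + 1) → ℝ)
    (hu1n : ∑ i, u1 i ^ 2 = 1) (hu2n : ∑ i, u2 i ^ 2 = 1)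
    (hu12 : ∑ i, u1 i * u2 i = 0)
    (hv1n : ∑ j, v1 j ^ 2 = 1) (hv2n : ∑ j, v2 j ^ 2 = 1)
    (hv12 : ∑ j, v1 j * v2 j = 0)
    (hN : ∀ i j, N i j = σ1 * u1 i * v1 j + σ2 * u2 i * v2 j)
    (hNpos : ∀ i j, 0 ≤ N i j)
    (hu1 : ∀ i, 0 < u1 i) (hv1 : ∀ j, 0 < v1 j)
    (hrow : ∀ i, ∃ j, 0 < N i j) (hcol : ∀ j, ∃ i, 0 < N i j)
    (hrank : N.rank = 2) :
    σ1 = σ2 →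
      (Finset.univ.sup' Finset.univ_nonempty
          (fun i => (Real.sqrt σ2 * u2 i) / (Real.sqrt σ1 * u1 i))) *
        (Finset.univ.inf' Finset.univ_nonempty
          (fun j => (Real.sqrt σ2 * v2 j) / (Real.sqrt σ1 * v1 j))) = -1 ∧
      (Finset.univ.inf' Finset.univ_nonempty
          (fun i => (Real.sqrt σ2 * u2 i) / (Real.sqrt σ1 * u1 i))) *
        (Finset.univ.sup' Finset.univ_nonempty
          (fun j => (Real.sqrt σ2 * v2 j) / (Real.sqrt σ1 * v1 j))) = -1 := by
  intro heq
  subst heq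
  have hσ1 : 0 < σ1 := hσ2
  have hsne : Real.sqrt σ1 ≠ 0 := (Real.sqrt_pos.mpr hσ1).ne'
  have hfe : (fun i => (Real.sqrt σ1 * u2 i) / (Real.sqrt σ1 * u1 i))
      = fun i : Fin (m+1) => u2 i / u1 i := by
    funext i; exact mul_div_mul_left _ _ hsne
  have hge : (fun j => (Real.sqrt σ1 * v2 j) / (Real.sqrt σ1 * v1 j))
      = fun j : Fin (n+1) => v2 j / v1 j := by
    funext j; exact mul_div_mul_left _ _ hsne
  rw [hfe, hge]
  set f : Fin (m+1) → ℝ := fun i => u2 i / u1 i with hfd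
  set g : Fin (n+1) → ℝ := fun j => v2 j / v1 j with hgd
  set mu := Finset.univ.inf' Finset.univ_nonempty f
  set Mu := Finset.univ.sup' Finset.univ_nonempty f
  set mv := Finset.univ.inf' Finset.univ_nonempty g
  set Mv := Finset.univ.sup' Finset.univ_nonempty g
  have hUu : mu * Mu ≤ -1 := stmt16_aux m u1 u2 hu1 hu1n hu2n hu12
  have hVv : mv * Mv ≤ -1 := stmt16_aux n v1 v2 hv1 hv1n hv2n hv12
  -- nonnegativity lower bound: f i * g j ≥ -1
  have hlow : ∀ i j, -1 ≤ f i * g j := by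
    intro i j
    have h1 := hNpos i j
    rw [hN i j] at h1
    have h2 : 0 ≤ u1 i * v1 j + u2 i * v2 j := by
      nlinarith [hσ1]
    have hui := hu1 i
    have hvj := hv1 j
    have hpos : 0 < u1 i * v1 j := mul_pos hui hvj
    rw [hfd, hgd]
    rw [div_mul_div_comm, le_div_iff₀ hpos]
    nlinarith
  -- attained values
  obtain ⟨i1, _, hi1⟩ := Finset.exists_mem_eq_sup' (Finset.univ_nonempty) f
  obtain ⟨i2, _, hi2⟩ := Finset.exists_mem_eq_inf' (Finset.univ_nonempty) f
  obtain ⟨j1, _, hj1⟩ := Finset.exists_mem_eq_sup' (Finset.univ_nonempty) g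
  obtain ⟨j2, _, hj2⟩ := Finset.exists_mem_eq_inf' (Finset.univ_nonempty) g
  have ha : -1 ≤ Mu * mv := by
    have e1 : Mu = f i1 := hi1
    have e2 : mv = g j2 := hj2
    rw [e1, e2]; exact hlow i1 j2
  have hb : -1 ≤ mu * Mv := by
    have e1 : mu = f i2 := hi2
    have e2 : Mv = g j1 := hj1
    rw [e1, e2]; exact hlow i2 j1
  have hmuMu : mu ≤ Mu := by
    have e1 : mu = f i2 := hi2
    rw [e1]; exact Finset.le_sup' f (Finset.mem_univ i2)
  have hmvMv : mv ≤ Mv := by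
    have e1 : mv = g j2 := hj2
    rw [e1]; exact Finset.le_sup' g (Finset.mem_univ j2)
  clear_value mu Mu mv Mv
  clear hi1 hi2 hj1 hj2 hlow hN hNpos hrow hcol hrank hu1 hv1
  have hMupos : 0 < Mu := by
    by_contra h; push_neg at h
    have : 0 ≤ mu * Mu := mul_nonneg_of_nonpos_of_nonpos (le_trans hmuMu h) h
    linarith
  have hmuneg : mu < 0 := by
    by_contra h; push_neg at h
    have : 0 ≤ mu * Mu := mul_nonneg h hMupos.le
    linarith
  have hMvpos : 0 < Mv := by
    by_contra h; push_neg at h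
    have : 0 ≤ mv * Mv := mul_nonneg_of_nonpos_of_nonpos (le_trans hmvMv h) h
    linarith
  have hmvneg : mv < 0 := by
    by_contra h; push_neg at h
    have : 0 ≤ mv * Mv := mul_nonneg h hMvpos.le
    linarith
  have hab : 1 ≤ (Mu * mv) * (mu * Mv) := by nlinarith [hUu, hVv]
  have haneg : Mu * mv < 0 := mul_neg_of_pos_of_neg hMupos hmvneg
  have hbneg : mu * Mv < 0 := mul_neg_of_neg_of_pos hmuneg hMvpos
  have hA : Mu * mv = -1 := by
    set a := Mu * mv
    set b := mu * Mv
    have h1 : 0 ≤ (a + 1) * b := by nlinarith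
    have h2 : (a + 1) * b ≤ 0 := mul_nonpos_of_nonneg_of_nonpos (by linarith) hbneg.le
    have h3 : (a + 1) * b = 0 := le_antisymm h2 h1
    rcases mul_eq_zero.mp h3 with h | h
    · linarith
    · exact absurd h hbneg.ne
  refine ⟨hA, ?_⟩
  have : 1 ≤ -(mu * Mv) := by nlinarith [hab, hA]
  linarith [hb, this]
end

section
/- Let σ₁ ≥ σ₂ > 0, and let t̲₂, t̄₁ > 0 satisfy σ₁t̲₂ − σ₂t̄₁ ≥ 0. Define F(t̲₂, t̄₁) = (σ₁t̲₂ − σ₂t̄₁)² / ((σ₁ + σ₂t̄₁²)(σ₂ + σ₁t̲₂²)). Then ∂F/∂t̲₂ ≥ 0 and ∂F/∂t̄₁ ≤ 0 on this domain (with equality exactly when σ₁t̲₂ = σ₂t̄₁). Consequently, over a rectangle [a₂, b₂] × [a₁, b₁] contained in the domain, F is minimized at (t̲₂, t̄₁) = (a₂, b₁). -/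
/-!
The function is symmetric under `(σ₁, s) ↔ (σ₂, t)`, so a single partial derivative is computed:
`∂F/∂s = 2σ₁σ₂ (σ₁s − σ₂t)(1 + st) / ((σ₁ + σ₂t²)(σ₂ + σ₁s²)²)`, whose sign is that of
`σ₁s − σ₂t` when `st > -1`. So `F` increases in `s` and, by the symmetry, decreases in `t` on the
domain, and the minimum over a rectangle is reached by lowering `s` and raising `t`.
-/

open Set

section

variable {σ₁ σ₂ s t : ℝ}

/-- The paper's `cos² θ_L` as a function of `s = t̲₂` and `t = t̄₁`. -/
noncomputable def cosSqL (σ₁ σ₂ s t : ℝ) : ℝ :=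
  (σ₁ * s - σ₂ * t) ^ 2 / ((σ₁ + σ₂ * t ^ 2) * (σ₂ + σ₁ * s ^ 2))

noncomputable def cosSqLDerivLeft (σ₁ σ₂ s t : ℝ) : ℝ :=
  2 * σ₁ * σ₂ * (σ₁ * s - σ₂ * t) * (1 + s * t) /
    ((σ₁ + σ₂ * t ^ 2) * (σ₂ + σ₁ * s ^ 2) ^ 2)

lemma cosSqL_swap (σ₁ σ₂ s t : ℝ) : cosSqL σ₁ σ₂ s t = cosSqL σ₂ σ₁ t s := by
  unfold cosSqL
  ring

lemma hasDerivAt_cosSqL_left (h₁ : 0 < σ₁) (h₂ : 0 < σ₂) (s t : ℝ) :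
    HasDerivAt (fun s => cosSqL σ₁ σ₂ s t) (cosSqLDerivLeft σ₁ σ₂ s t) s := by
  have hnum : HasDerivAt (fun s => (σ₁ * s - σ₂ * t) ^ 2) (2 * (σ₁ * s - σ₂ * t) * σ₁) s := by
    simpa using (((hasDerivAt_id s).const_mul σ₁).sub_const (σ₂ * t)).fun_pow 2
  have hden : HasDerivAt (fun s => (σ₁ + σ₂ * t ^ 2) * (σ₂ + σ₁ * s ^ 2))
      ((σ₁ + σ₂ * t ^ 2) * (σ₁ * (2 * s))) s := by
    simpa using ((((hasDerivAt_id s).pow 2).const_mul σ₁).const_add σ₂).const_mul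
      (σ₁ + σ₂ * t ^ 2)
  refine (hnum.div hden (by positivity)).congr_deriv ?_
  unfold cosSqLDerivLeft
  field_simp
  ring

lemma hasDerivAt_cosSqL_right (h₁ : 0 < σ₁) (h₂ : 0 < σ₂) (s t : ℝ) :
    HasDerivAt (fun t => cosSqL σ₁ σ₂ s t) (cosSqLDerivLeft σ₂ σ₁ t s) t := by
  simpa only [cosSqL_swap σ₁ σ₂ s] using hasDerivAt_cosSqL_left h₂ h₁ t s

lemma cosSqLDerivLeft_nonneg (h₁ : 0 < σ₁) (h₂ : 0 < σ₂) (hst : 0 < 1 + s * t)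
    (h : σ₂ * t ≤ σ₁ * s) : 0 ≤ cosSqLDerivLeft σ₁ σ₂ s t := by
  have : 0 ≤ σ₁ * s - σ₂ * t := sub_nonneg.mpr h
  unfold cosSqLDerivLeft
  positivity

lemma cosSqLDerivLeft_nonpos (h₁ : 0 < σ₁) (h₂ : 0 < σ₂) (hst : 0 < 1 + s * t)
    (h : σ₁ * s ≤ σ₂ * t) : cosSqLDerivLeft σ₁ σ₂ s t ≤ 0 := by
  have : 0 ≤ σ₂ * t - σ₁ * s := sub_nonneg.mpr h
  have hneg : cosSqLDerivLeft σ₁ σ₂ s t = -(2 * σ₁ * σ₂ * (σ₂ * t - σ₁ * s) * (1 + s * t) /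
      ((σ₁ + σ₂ * t ^ 2) * (σ₂ + σ₁ * s ^ 2) ^ 2)) := by
    unfold cosSqLDerivLeft
    ring
  rw [hneg, neg_nonpos]
  positivity

lemma cosSqLDerivLeft_eq_zero_iff (h₁ : 0 < σ₁) (h₂ : 0 < σ₂) (hst : 0 < 1 + s * t) :
    cosSqLDerivLeft σ₁ σ₂ s t = 0 ↔ σ₁ * s = σ₂ * t := by
  have hden : (σ₁ + σ₂ * t ^ 2) * (σ₂ + σ₁ * s ^ 2) ^ 2 ≠ 0 := by positivity
  simp only [cosSqLDerivLeft, div_eq_zero_iff, hden, mul_eq_zero, h₁.ne', h₂.ne',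
    hst.ne', two_ne_zero, false_or, or_false, sub_eq_zero]

lemma continuous_cosSqL_left (h₁ : 0 < σ₁) (h₂ : 0 < σ₂) (t : ℝ) :
    Continuous (fun s => cosSqL σ₁ σ₂ s t) :=
  continuous_iff_continuousAt.mpr fun s => (hasDerivAt_cosSqL_left h₁ h₂ s t).continuousAt

lemma monotoneOn_cosSqL_left (h₁ : 0 < σ₁) (h₂ : 0 < σ₂) (ht : 0 ≤ t) :
    MonotoneOn (fun s => cosSqL σ₁ σ₂ s t) (Ici (σ₂ * t / σ₁)) := by
  refine monotoneOn_of_hasDerivWithinAt_nonneg (convex_Ici _)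
    (continuous_cosSqL_left h₁ h₂ t).continuousOn
    (fun s _ => (hasDerivAt_cosSqL_left h₁ h₂ s t).hasDerivWithinAt) fun s hs => ?_
  rw [interior_Ici, mem_Ioi, div_lt_iff₀ h₁] at hs
  have hs₀ : 0 ≤ s := by nlinarith
  exact cosSqLDerivLeft_nonneg h₁ h₂ (by positivity) (by linarith)

lemma antitoneOn_cosSqL_left (h₁ : 0 < σ₁) (h₂ : 0 < σ₂) (ht : 0 ≤ t) :
    AntitoneOn (fun s => cosSqL σ₁ σ₂ s t) (Icc 0 (σ₂ * t / σ₁)) := by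
  refine antitoneOn_of_hasDerivWithinAt_nonpos (convex_Icc _ _)
    (continuous_cosSqL_left h₁ h₂ t).continuousOn
    (fun s _ => (hasDerivAt_cosSqL_left h₁ h₂ s t).hasDerivWithinAt) fun s hs => ?_
  rw [interior_Icc, mem_Ioo, lt_div_iff₀ h₁] at hs
  have hs₀ : 0 ≤ s := hs.1.le
  exact cosSqLDerivLeft_nonpos h₁ h₂ (by positivity) (by linarith)

lemma antitoneOn_cosSqL_right (h₁ : 0 < σ₁) (h₂ : 0 < σ₂) (hs : 0 ≤ s) :
    AntitoneOn (fun t => cosSqL σ₁ σ₂ s t) (Icc 0 (σ₁ * s / σ₂)) := by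
  simpa only [cosSqL_swap σ₁ σ₂ s] using antitoneOn_cosSqL_left h₂ h₁ hs

end

theorem stmt_19 (σ1 σ2 : ℝ) (h12 : σ2 ≤ σ1) (h2 : 0 < σ2)
    (F : ℝ → ℝ → ℝ)
    (hF : ∀ s t, F s t =
      (σ1 * s - σ2 * t) ^ 2 / ((σ1 + σ2 * t ^ 2) * (σ2 + σ1 * s ^ 2))) :
    (∀ s t : ℝ, 0 < s → 0 < t → 0 ≤ σ1 * s - σ2 * t →
      0 ≤ deriv (fun s' => F s' t) s ∧
      deriv (fun t' => F s t') t ≤ 0 ∧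
      (deriv (fun s' => F s' t) s = 0 ↔ σ1 * s = σ2 * t) ∧
      (deriv (fun t' => F s t') t = 0 ↔ σ1 * s = σ2 * t)) ∧
    (∀ a2 b2 a1 b1 : ℝ, 0 < a2 → 0 < a1 → a2 ≤ b2 → a1 ≤ b1 →
      (∀ s ∈ Set.Icc a2 b2, ∀ t ∈ Set.Icc a1 b1, 0 ≤ σ1 * s - σ2 * t) →
      ∀ s ∈ Set.Icc a2 b2, ∀ t ∈ Set.Icc a1 b1, F a2 b1 ≤ F s t) := by
  have h1 : 0 < σ1 := h2.trans_le h12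
  obtain rfl : F = cosSqL σ1 σ2 := funext₂ hF
  refine ⟨fun s t hs ht hst => ?_, fun a2 b2 a1 b1 ha2 ha1 hab2 hab1 hdom s hs t ht => ?_⟩
  · have hst₁ : 0 < 1 + s * t := by positivity
    have hts₁ : 0 < 1 + t * s := by positivity
    rw [sub_nonneg] at hst
    rw [(hasDerivAt_cosSqL_left h1 h2 s t).deriv, (hasDerivAt_cosSqL_right h1 h2 s t).deriv,
      cosSqLDerivLeft_eq_zero_iff h1 h2 hst₁, cosSqLDerivLeft_eq_zero_iff h2 h1 hts₁, eq_comm]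
    exact ⟨cosSqLDerivLeft_nonneg h1 h2 hst₁ hst, cosSqLDerivLeft_nonpos h2 h1 hts₁ hst,
      Iff.rfl, Iff.rfl⟩
  · have ha2s : a2 ∈ Icc a2 b2 := ⟨le_rfl, hab2⟩
    have ht₀ : 0 ≤ t := ha1.le.trans ht.1
    have hbound : ∀ t' ∈ Icc a1 b1, t' ∈ Icc 0 (σ1 * a2 / σ2) := fun t' ht' =>
      ⟨ha1.le.trans ht'.1, (le_div_iff₀ h2).mpr (by linarith [hdom a2 ha2s t' ht'])⟩
    have hbound' : ∀ s' ∈ Icc a2 b2, s' ∈ Ici (σ2 * t / σ1) := fun s' hs' =>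
      (div_le_iff₀ h1).mpr (by linarith [hdom s' hs' t ht])
    calc cosSqL σ1 σ2 a2 b1
        ≤ cosSqL σ1 σ2 a2 t := antitoneOn_cosSqL_right h1 h2 ha2.le
          (hbound t ht) (hbound b1 ⟨hab1, le_rfl⟩) ht.2
      _ ≤ cosSqL σ1 σ2 s t := monotoneOn_cosSqL_left h1 h2 ht₀
          (hbound' a2 ha2s) (hbound' s hs) hs.1
end
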